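/- Let v > 0 and let μ be the product measure (gaussianReal 0 v).prod (gaussianReal 0 v) on ℝ × ℝ, i.e. the centered two-dimensional Gaussian measure whose two coordinates are independent with variance v. Then the first absolute moment of the Euclidean norm is ∫ z, ‖z‖ ∂μ = √v · √(π/2). -/

import Mathlib

open MeasureTheory ProbabilityTheory Real Set
open scoped NNReal

/-!
In polar coordinates the product density `(2πv)⁻¹ exp (-(x² + y²) / (2v))` becomes the Rayleigh
density `(r / v) exp (-r² / (2v))` of the radius, so the first moment is
`v⁻¹ ∫₀^∞ r² exp (-r² / (2v)) dr`, a Gamma integral equal to `√(2πv) / 2 = √v · √(π/2)`.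
For `v = 0` both coordinates are the Dirac mass at `0` and both sides vanish.
-/

theorem integral_Ioi_sq_mul_exp_neg_mul_sq {b : ℝ} (hb : 0 < b) :
    ∫ r in Ioi (0 : ℝ), r ^ 2 * exp (-b * r ^ 2) = √(π / b) / (4 * b) := by
  have hGamma : Gamma ((2 + 1) / 2) = √π / 2 := by
    rw [show ((2 : ℝ) + 1) / 2 = 1 / 2 + 1 by norm_num, Gamma_add_one (by norm_num),
      Gamma_one_half_eq]
    ring
  have hpow : b ^ (-(2 + 1) / 2 : ℝ) = (b * √b)⁻¹ := by
    rw [show (-(2 + 1) / 2 : ℝ) = -(1 + 1 / 2) by norm_num, rpow_neg hb.le,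
      rpow_add hb, rpow_one, ← sqrt_eq_rpow]
  have h := integral_rpow_mul_exp_neg_mul_rpow two_pos (by norm_num : (-1 : ℝ) < 2) hb
  simp only [rpow_two] at h
  rw [h, hGamma, hpow, sqrt_div' _ hb.le]
  field_simp
  norm_num

theorem integral_comp_sqrt_sq_add_sq {E : Type*} [NormedAddCommGroup E] [NormedSpace ℝ E]
    (f : ℝ → E) :
    ∫ z : ℝ × ℝ, f √(z.1 ^ 2 + z.2 ^ 2) = (2 * π) • ∫ r in Ioi (0 : ℝ), r • f r := by
  rw [← integral_comp_polarCoord_symm, polarCoord_target]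
  calc ∫ p in Ioi (0 : ℝ) ×ˢ Ioo (-π) π,
        p.1 • f √((polarCoord.symm p).1 ^ 2 + (polarCoord.symm p).2 ^ 2)
      = ∫ p in Ioi (0 : ℝ) ×ˢ Ioo (-π) π, p.1 • f p.1 := by
        refine setIntegral_congr_fun (measurableSet_Ioi.prod measurableSet_Ioo) fun p hp => ?_
        have : (polarCoord.symm p).1 ^ 2 + (polarCoord.symm p).2 ^ 2 = p.1 ^ 2 := by
          simp only [polarCoord_symm_apply]
          linear_combination p.1 ^ 2 * sin_sq_add_cos_sq p.2
        rw [this, sqrt_sq hp.1.le]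
    _ = (2 * π) • ∫ r in Ioi (0 : ℝ), r • f r := by
        rw [Measure.volume_eq_prod, ← Measure.prod_restrict, integral_fun_fst (fun r => r • f r)]
        simp [Measure.real, Real.volume_Ioo, two_mul, pi_pos.le]

theorem gaussianPDFReal_zero_mul_gaussianPDFReal_zero (v : ℝ≥0) (x y : ℝ) :
    gaussianPDFReal 0 v x * gaussianPDFReal 0 v y
      = (2 * π * v)⁻¹ * exp (-(x ^ 2 + y ^ 2) / (2 * v)) := by
  simp only [gaussianPDFReal_def, sub_zero]
  rw [mul_mul_mul_comm, ← mul_inv, mul_self_sqrt (by positivity), ← exp_add, neg_add, add_div]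

theorem gaussianReal_prod_eq_withDensity (m₁ m₂ : ℝ) {v₁ v₂ : ℝ≥0} (hv₁ : v₁ ≠ 0) (hv₂ : v₂ ≠ 0) :
    (gaussianReal m₁ v₁).prod (gaussianReal m₂ v₂)
      = volume.withDensity fun z => gaussianPDF m₁ v₁ z.1 * gaussianPDF m₂ v₂ z.2 := by
  rw [gaussianReal_of_var_ne_zero _ hv₁, gaussianReal_of_var_ne_zero _ hv₂,
    prod_withDensity (measurable_gaussianPDF _ _) (measurable_gaussianPDF _ _),
    Measure.volume_eq_prod]

theorem integral_comp_sqrt_sq_add_sq_gaussianReal_prod {E : Type*} [NormedAddCommGroup E]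
    [NormedSpace ℝ E] {v : ℝ≥0} (hv : v ≠ 0) (f : ℝ → E) :
    ∫ z, f √(z.1 ^ 2 + z.2 ^ 2) ∂(gaussianReal 0 v).prod (gaussianReal 0 v)
      = ∫ r in Ioi (0 : ℝ), (r / v * exp (-r ^ 2 / (2 * v))) • f r := by
  have hdensity (z : ℝ × ℝ) : (gaussianPDF 0 v z.1 * gaussianPDF 0 v z.2).toReal
      = (2 * π * v)⁻¹ * exp (-√(z.1 ^ 2 + z.2 ^ 2) ^ 2 / (2 * v)) := by
    rw [ENNReal.toReal_mul, toReal_gaussianPDF, toReal_gaussianPDF,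
      gaussianPDFReal_zero_mul_gaussianPDFReal_zero, sq_sqrt (by positivity)]
  rw [gaussianReal_prod_eq_withDensity 0 0 hv hv,
    integral_withDensity_eq_integral_toReal_smul (by fun_prop)
      (ae_of_all _ fun _ => ENNReal.mul_lt_top gaussianPDF_lt_top gaussianPDF_lt_top)]
  simp_rw [hdensity, integral_comp_sqrt_sq_add_sq
    (fun r => ((2 * π * v)⁻¹ * exp (-r ^ 2 / (2 * v))) • f r), ← integral_smul, smul_smul]
  refine setIntegral_congr_fun measurableSet_Ioi fun r _ => ?_
  field_simp

theorem gaussian_norm_first_moment_general (v : ℝ≥0)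
    (μ : Measure (ℝ × ℝ)) (hμ : μ = (gaussianReal 0 v).prod (gaussianReal 0 v)) :
    ∫ z : ℝ × ℝ, Real.sqrt (z.1 ^ 2 + z.2 ^ 2) ∂μ
      = Real.sqrt v * Real.sqrt (Real.pi / 2) := by
  subst hμ
  rcases eq_or_ne v 0 with rfl | hv
  · simp [gaussianReal_zero_var, Measure.dirac_prod_dirac]
  have hv₀ : (0 : ℝ) < v := NNReal.coe_pos.mpr (pos_iff_ne_zero.mpr hv)
  calc ∫ z, √(z.1 ^ 2 + z.2 ^ 2) ∂(gaussianReal 0 v).prod (gaussianReal 0 v)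
      = ∫ r in Ioi (0 : ℝ), (r / v * exp (-r ^ 2 / (2 * v))) • r :=
        integral_comp_sqrt_sq_add_sq_gaussianReal_prod hv fun r => r
    _ = (v : ℝ)⁻¹ * ∫ r in Ioi (0 : ℝ), r ^ 2 * exp (-(2 * v : ℝ)⁻¹ * r ^ 2) := by
        rw [← integral_const_mul]
        refine setIntegral_congr_fun measurableSet_Ioi fun r _ => ?_
        rw [smul_eq_mul]
        ring_nf
    _ = √v * √(π / 2) := by
        rw [integral_Ioi_sq_mul_exp_neg_mul_sq (by positivity), ← sqrt_mul hv₀.le,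
          show π / (2 * v : ℝ)⁻¹ = 2 ^ 2 * (v * (π / 2)) by field_simp,
          sqrt_mul (by positivity), sqrt_sq zero_le_two]
        field_simp
        ring

/-- For the centered two-dimensional Gaussian measure with independent coordinates of
variance `v > 0`, the first absolute moment of the Euclidean norm equals `√v · √(π/2)`. -/
theorem gaussian_norm_first_moment (v : ℝ≥0) (hv : 0 < v)
    (μ : Measure (ℝ × ℝ)) (hμ : μ = (gaussianReal 0 v).prod (gaussianReal 0 v)) :
    ∫ z : ℝ × ℝ, Real.sqrt (z.1 ^ 2 + z.2 ^ 2) ∂μ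
      = Real.sqrt v * Real.sqrt (Real.pi / 2) :=
  gaussian_norm_first_moment_general v μ hμ
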